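/- Let n = p^μ be a prime power with p ≥ 7, μ ≥ 2, and n ≥ 289. Let b, c be integers with 3 ≤ b, c = b + 1 < n/2, such that (1, 1, c, n−b, n−3) is a minimal zero-sum sequence over Z/n. Then the minimum over units m modulo n of |m|_n + |m|_n + |m·c|_n + |m·(n−b)|_n + |m·(n−3)|_n equals 2n if and only if c = (n−1)/2; otherwise this minimum equals n. -/

import Mathlib

/-!
Every `residueSum n b c m` is a positive multiple of `n`, since `1 + 1 + c + (n - b) + (n - 3) = 2n`,
and `m = 1` gives `2n`.

If `n = 2c + 1`, a sum equal to `n` would force residues with `x₂ + x₃ = x₁` and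
`n ∣ 2x₂ + x₁ < 3x₁ < n`, which is absurd.

Otherwise it suffices to find `m` prime to `p` with `3m < n` and `0 < t < m`, where `t = |cm|_n`:
the five residues are then `m, m, t, m - t, n - 3m`. If `p ∣ c`, solve `cm ≡ gcd(c, n)` with `m`
just above `gcd(c, n)`. If `p ∤ c`, walk down the slow continued-fraction expansion of `c / n`
through bases of the lattice `{(m, t) | t ≡ cm (mod n)}`: the first sum of basis vectors with
`0 < t < m` has `3m < n`, and if `p` divides its `m`, the next convergent works instead.
-/

/-- `lpr n x` is the least positive residue of `x` modulo `n` (in `[1, n]`). -/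
def lpr (n x : ℕ) : ℕ := if x % n = 0 then n else x % n

open Nat

def residueSum (n b c m : ℕ) : ℕ :=
  lpr n m + lpr n m + lpr n (m * c) + lpr n (m * (n - b)) + lpr n (m * (n - 3))

lemma eq_of_natCast_eq_of_lt {n x y : ℕ} (hx : x < n) (hy : y < n)
    (h : (x : ZMod n) = y) : x = y := by
  rw [← ZMod.val_cast_of_lt hx, h, ZMod.val_cast_of_lt hy]

lemma lpr_pos (x : ℕ) {n : ℕ} (hn : 0 < n) : 0 < lpr n x := by
  unfold lpr; split <;> omega

lemma natCast_lpr (n x : ℕ) : (lpr n x : ZMod n) = x := by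
  unfold lpr
  split_ifs with h
  · rw [ZMod.natCast_self, eq_comm, ZMod.natCast_eq_zero_iff]
    exact Nat.dvd_of_mod_eq_zero h
  · exact ZMod.natCast_mod x n

lemma lpr_eq_of_natCast_eq {n x y : ℕ} (hy : 0 < y) (hyn : y < n) (h : (x : ZMod n) = y) :
    lpr n x = y := by
  have hx : x % n = y := by rw [← ZMod.val_natCast, h, ZMod.val_cast_of_lt hyn]
  rw [lpr, if_neg (by omega), hx]

lemma lpr_of_lt {n x : ℕ} (hx : 0 < x) (hxn : x < n) : lpr n x = x :=
  lpr_eq_of_natCast_eq hx hxn rfl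

section residueSum

variable {n b c : ℕ}

lemma residueSum_pos (m : ℕ) (hn : 0 < n) : 0 < residueSum n b c m := by
  have := lpr_pos m hn
  unfold residueSum
  omega

lemma dvd_residueSum (hsum : 1 + 1 + c + (n - b) + (n - 3) = 2 * n) (m : ℕ) :
    n ∣ residueSum n b c m := by
  have h := congrArg (Nat.cast : ℕ → ZMod n) hsum
  simp only [Nat.cast_add, Nat.cast_mul, Nat.cast_one, Nat.cast_ofNat, ZMod.natCast_self,
    mul_zero] at h
  rw [← ZMod.natCast_eq_zero_iff]
  simp only [residueSum, Nat.cast_add, natCast_lpr, Nat.cast_mul]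
  linear_combination (m : ZMod n) * h

lemma residueSum_one (hbc : c = b + 1) (hb : 3 ≤ b) (hcn : 2 * c < n) :
    residueSum n b c 1 = 2 * n := by
  simp only [residueSum, one_mul]
  rw [lpr_of_lt one_pos (by omega), lpr_of_lt (by omega : 0 < c) (by omega),
    lpr_of_lt (by omega : 0 < n - b) (by omega), lpr_of_lt (by omega : 0 < n - 3) (by omega)]
  omega

lemma residueSum_eq_self (hbc : c = b + 1) (hbn : b < n) {m t : ℕ} (hm : 3 * m < n)
    (ht : 0 < t) (htm : t < m) (hcm : (c * m : ZMod n) = t) : residueSum n b c m = n := by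
  have h3n : 3 ≤ n := by omega
  have hc : lpr n (m * c) = t :=
    lpr_eq_of_natCast_eq ht (by omega) (by rw [Nat.cast_mul, mul_comm, hcm])
  have hb : lpr n (m * (n - b)) = m - t := by
    refine lpr_eq_of_natCast_eq (by omega) (by omega) ?_
    rw [Nat.cast_mul, Nat.cast_sub hbn.le, Nat.cast_sub htm.le, ZMod.natCast_self, ← hcm, hbc]
    push_cast
    ring
  have h3 : lpr n (m * (n - 3)) = n - 3 * m := by
    refine lpr_eq_of_natCast_eq (by omega) (by omega) ?_
    rw [Nat.cast_mul, Nat.cast_sub h3n, Nat.cast_sub hm.le, ZMod.natCast_self]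
    push_cast
    ring
  rw [residueSum, lpr_of_lt (by omega) (by omega), hc, hb, h3]
  omega

lemma residueSum_ne_self (hn : 2 * c + 1 = n) (hbc : c = b + 1) (m : ℕ) :
    residueSum n b c m ≠ n := by
  intro h
  have hn0 : 0 < n := by omega
  have h1 := lpr_pos m hn0
  have h2 := lpr_pos (m * c) hn0
  have h3 := lpr_pos (m * (n - b)) hn0
  have h4 := lpr_pos (m * (n - 3)) hn0
  have hsum : lpr n (m * c) + lpr n (m * (n - b)) = lpr n m := by
    rw [residueSum] at h
    refine eq_of_natCast_eq_of_lt (n := n) (by omega) (by omega) ?_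
    push_cast
    rw [natCast_lpr, natCast_lpr, natCast_lpr, Nat.cast_mul, Nat.cast_mul,
      Nat.cast_sub (by omega : b ≤ n), ZMod.natCast_self, hbc]
    push_cast
    ring
  have hdvd : n ∣ 2 * lpr n (m * c) + lpr n m := by
    rw [← ZMod.natCast_eq_zero_iff]
    push_cast
    have hn' : ((2 * c + 1 : ℕ) : ZMod n) = 0 := by rw [hn, ZMod.natCast_self]
    push_cast at hn'
    rw [natCast_lpr, natCast_lpr, Nat.cast_mul]
    linear_combination (m : ZMod n) * hn'
  rw [residueSum] at h
  have := Nat.le_of_dvd (by omega) hdvd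
  omega

lemma two_mul_le_residueSum (hn : 2 * c + 1 = n) (hbc : c = b + 1)
    (hsum : 1 + 1 + c + (n - b) + (n - 3) = 2 * n) (m : ℕ) : 2 * n ≤ residueSum n b c m := by
  obtain ⟨k, hk⟩ := dvd_residueSum hsum m
  have hne := residueSum_ne_self hn hbc m
  have hpos := residueSum_pos (b := b) (c := c) m (by omega : 0 < n)
  rw [hk] at hne hpos ⊢
  rcases k with _ | _ | k
  · simp at hpos
  · simp at hne
  · nlinarith

end residueSum

lemma three_mul_add_lt_of_det {n mu tu mv tv : ℕ} (hdet : mu * tv + mv * tu = n)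
    (hn : 289 ≤ n) (htu : 0 < tu) (htv : 4 ≤ tv) (hmv : mv ≤ tv) (hmu : 2 ≤ mu)
    (hmu3 : tu ≤ 2 → 3 ≤ mu) : 3 * (mv + mu) < n := by
  rcases Nat.lt_or_ge tu 3 with htu2 | htu3
  · have hmu3 := hmu3 (by omega)
    by_contra! hle
    have h1 : mu * tv ≤ 3 * mu + 2 * tv := by nlinarith
    have htv9 : tv ≤ 9 := by nlinarith [Nat.mul_le_mul (show 3 ≤ mu from hmu3) htv]
    have hmu18 : mu ≤ 18 := by nlinarith
    omega
  · nlinarith [Nat.mul_le_mul_left mu htv, Nat.mul_le_mul_left mv htu3]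

lemma three_mul_mul_sub_lt_mul_sub {n mu T mv tu : ℕ} (hdet : mu * T + (mv + mu) * tu = n)
    (hn : 289 ≤ n) (htu : 0 < tu) (hT : 7 ≤ T) (htuT : tu < T) (hmu : 2 ≤ mu)
    (hmu3 : tu ≤ 2 → 3 ≤ mu) (hmv : mv ≤ T + tu) :
    3 * ((mv + mu) * (T - tu)) < n * (T - 3) := by
  obtain ⟨s, rfl⟩ : ∃ s, T = s + tu := ⟨T - tu, by omega⟩
  obtain ⟨r, hr⟩ : ∃ r, s + tu = r + 3 := ⟨s + tu - 3, by omega⟩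
  rw [Nat.add_sub_cancel, hr, Nat.add_sub_cancel]
  rcases Nat.lt_or_ge tu 3 with htu2 | htu3
  · have hmu3 := hmu3 (by omega)
    by_contra! hle
    obtain ⟨q, rfl⟩ : ∃ q, r = q + 4 := ⟨r - 4, by omega⟩
    have h1 : mu * (q + 4) ≤ 2 * (mv + mu) := by
      interval_cases tu
      · obtain rfl : s = q + 6 := by omega
        nlinarith
      · obtain rfl : s = q + 5 := by omega
        nlinarith
    have h2 : mu * (q + 2) ≤ 2 * (q + 9) := by
      have : mu * (q + 4) = mu * (q + 2) + 2 * mu := by ring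
      omega
    have hq : q ≤ 12 := by nlinarith
    have hmu9 : mu ≤ 9 := by nlinarith
    subst hdet
    nlinarith
  · obtain ⟨k, rfl⟩ : ∃ k, tu = k + 3 := ⟨tu - 3, by omega⟩
    obtain rfl : r = s + k := by omega
    subst hdet
    have h1 : 0 < mu * (s + (k + 3)) * (s + k) :=
      Nat.mul_pos (Nat.mul_pos (by omega) (by omega)) (by omega)
    nlinarith [Nat.zero_le ((mv + mu) * k * (s + k)), Nat.zero_le ((mv + mu) * k)]

lemma three_mul_mul_lt_mul_sub {n mu T M tu t : ℕ} (hdet : mu * T + M * tu = n)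
    (hT : 7 ≤ T) (hTtu : T ≤ tu) (ht : t < T) (hM : 0 < M) :
    3 * (M * t) < n * (T - 3) := by
  obtain ⟨r, rfl⟩ : ∃ r, T = r + 7 := ⟨T - 7, by omega⟩
  rw [show r + 7 - 3 = r + 4 by omega]
  have hn : M * (r + 7) ≤ n := by nlinarith [Nat.mul_le_mul_left M hTtu]
  nlinarith [Nat.mul_le_mul_left M ht.le, Nat.mul_le_mul_right (r + 4) hn]
/-- `t` is `|c m|_n`; see `residueSum_eq_self`. -/
def IsGoodMultiplier (p n c m : ℕ) : Prop :=
  ¬ p ∣ m ∧ 3 * m < n ∧ ∃ t, 0 < t ∧ t < m ∧ (c * m : ZMod n) = t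

lemma exists_natCast_mul_eq_one {P c : ℕ} [NeZero P] (h : Coprime c P) (a : ℕ) :
    ∃ m, a < m ∧ m ≤ a + P ∧ (c * m : ZMod P) = 1 := by
  refine ⟨a + 1 + ((c : ZMod P)⁻¹ - (a + 1 : ZMod P)).val, by omega, ?_, ?_⟩
  · have := ZMod.val_lt ((c : ZMod P)⁻¹ - (a + 1 : ZMod P))
    omega
  · push_cast
    rw [ZMod.natCast_zmod_val]
    linear_combination ZMod.coe_mul_inv_eq_one c h

lemma exists_natCast_mul_eq_gcd {c n : ℕ} (hc : 0 < c) (hcn : c < n) (a : ℕ) :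
    ∃ m, a < m ∧ m ≤ a + n / Nat.gcd c n ∧ Coprime m (n / Nat.gcd c n) ∧
      (c * m : ZMod n) = Nat.gcd c n := by
  set g := Nat.gcd c n
  set P := n / g
  have hg : 0 < g := Nat.gcd_pos_of_pos_left n hc
  have hnP : g * P = n := Nat.mul_div_cancel' (Nat.gcd_dvd_right c n)
  have hcg : g * (c / g) = c := Nat.mul_div_cancel' (Nat.gcd_dvd_left c n)
  have hgc : g ≤ c := Nat.le_of_dvd hc (Nat.gcd_dvd_left c n)
  have hP : 1 < P := by
    by_contra! hP
    interval_cases P <;> omega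
  have : NeZero P := ⟨by omega⟩
  obtain ⟨m, ham, hmP, hm⟩ := exists_natCast_mul_eq_one (Nat.coprime_div_gcd_div_gcd hg) a
  refine ⟨m, ham, hmP, (ZMod.isUnit_iff_coprime m P).1 (.of_mul_eq_one_right _ hm), ?_⟩
  have hmod : c / g * m % P = 1 := by
    rw [← ZMod.val_natCast, Nat.cast_mul, hm, ZMod.val_one_eq_one_mod, Nat.mod_eq_of_lt hP]
  have : c * m % n = g := by
    rw [← hnP, ← hcg, mul_assoc, Nat.mul_mod_mul_left, hmod, mul_one]
  rw [← Nat.cast_mul, ← ZMod.natCast_mod, this]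

lemma exists_isGoodMultiplier_of_dvd {p μ n c : ℕ} (hp : p.Prime) (hp7 : 7 ≤ p)
    (hn : n = p ^ μ) (hpc : p ∣ c) (hc : 0 < c) (hcn : c < n) :
    ∃ m, IsGoodMultiplier p n c m := by
  obtain ⟨j, hjμ, hg⟩ : ∃ j ≤ μ, Nat.gcd c n = p ^ j :=
    (Nat.dvd_prime_pow hp).1 (hn ▸ Nat.gcd_dvd_right c n)
  obtain ⟨m, hgm, hmP, hcop, hcm⟩ := exists_natCast_mul_eq_gcd hc hcn (Nat.gcd c n)
  have hpg : p ∣ Nat.gcd c n := by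
    refine Nat.dvd_gcd hpc (hn ▸ dvd_pow_self p ?_)
    rintro rfl
    rw [pow_zero] at hn
    omega
  have hj : j ≠ 0 := by
    rintro rfl
    rw [hg, pow_zero] at hpg
    exact hp.not_dvd_one hpg
  have hjμ' : j < μ := by
    refine lt_of_le_of_ne hjμ ?_
    rintro rfl
    have hgn : Nat.gcd c n = n := hg.trans hn.symm
    have := Nat.le_of_dvd hc (hgn ▸ Nat.gcd_dvd_left c n)
    omega
  have hP : n / Nat.gcd c n = p ^ (μ - j) := by rw [hg, hn, Nat.pow_div hjμ hp.pos]
  have hpP : p ∣ n / Nat.gcd c n := hP ▸ dvd_pow_self p (by omega)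
  have h7g : 7 * Nat.gcd c n ≤ n := by
    rw [hg, hn]
    calc 7 * p ^ j ≤ p * p ^ j := Nat.mul_le_mul_right _ hp7
      _ = p ^ (j + 1) := by ring
      _ ≤ p ^ μ := Nat.pow_le_pow_right hp.pos hjμ'
  have h7P : 7 * (n / Nat.gcd c n) ≤ n := by
    calc 7 * (n / Nat.gcd c n) ≤ Nat.gcd c n * (n / Nat.gcd c n) :=
          Nat.mul_le_mul_right _ (hp7.trans (Nat.le_of_dvd (Nat.gcd_pos_of_pos_left n hc) hpg))
      _ = n := Nat.mul_div_cancel' (Nat.gcd_dvd_right c n)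
  refine ⟨m, fun hpm => hp.not_dvd_one ?_, by linarith, Nat.gcd c n,
    Nat.gcd_pos_of_pos_left n hc, hgm, hcm⟩
  exact hcop.gcd_eq_one ▸ Nat.dvd_gcd hpm hpP

/-- `(mu, -tu)` and `(mv, tv)` form a basis of the lattice `{(m, t) | t ≡ c m (mod n)}`, whose
covolume is `n`, with `(mv, tv)` on or above the diagonal `t = m`. -/
structure DescentState (n c mu tu mv tv : ℕ) : Prop where
  det : mu * tv + mv * tu = n
  cast_v : (c * mv : ZMod n) = tv
  cast_u : (c * mu : ZMod n) = -tu
  tu_pos : 0 < tu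
  mv_le_tv : mv ≤ tv
  two_le_mu : 2 ≤ mu
  three_le_mu : tu ≤ 2 → 3 ≤ mu
  mv_eq_one_or : mv = 1 ∨ 3 ≤ mv
  coprime_t : Coprime tu tv
  coprime_m : Coprime mu mv

namespace DescentState

variable {p n c mu tu mv tv T : ℕ}

lemma one_le_mv (h : DescentState n c mu tu mv tv) : 1 ≤ mv := by
  rcases h.mv_eq_one_or with h | h <;> omega

lemma tv_lt (h : DescentState n c mu tu mv tv) : tv < n := by
  have := h.det
  have := h.one_le_mv
  have := h.tu_pos
  nlinarith [h.two_le_mu]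

lemma mv_add_mu (h : DescentState n c mu tu mv (T + tu)) (hle : mv + mu ≤ T) :
    DescentState n c mu tu (mv + mu) T where
  det := by rw [← h.det]; ring
  cast_v := by
    have hv := h.cast_v
    have hu := h.cast_u
    push_cast at hv hu ⊢
    linear_combination hv + hu
  cast_u := h.cast_u
  tu_pos := h.tu_pos
  mv_le_tv := hle
  two_le_mu := h.two_le_mu
  three_le_mu := h.three_le_mu
  mv_eq_one_or := Or.inr (by have := h.two_le_mu; have := h.one_le_mv; omega)
  coprime_t := Nat.coprime_add_self_right.1 h.coprime_t
  coprime_m := Nat.coprime_add_self_right.2 h.coprime_m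

lemma mu_add_mv (h : DescentState n c mu (T + tv) mv tv) (hT : 0 < T) :
    DescentState n c (mu + mv) T mv tv where
  det := by rw [← h.det]; ring
  cast_v := h.cast_v
  cast_u := by
    have hv := h.cast_v
    have hu := h.cast_u
    push_cast at hv hu ⊢
    linear_combination hv + hu
  tu_pos := hT
  mv_le_tv := h.mv_le_tv
  two_le_mu := by have := h.two_le_mu; omega
  three_le_mu _ := by have := h.two_le_mu; have := h.one_le_mv; omega
  mv_eq_one_or := h.mv_eq_one_or
  coprime_t := Nat.coprime_add_self_left.1 h.coprime_t
  coprime_m := Nat.coprime_add_self_left.2 h.coprime_m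

lemma tu_ne_tv (h : DescentState n c mu tu mv tv) (hc : 1 < c) (hcn : c < n) : tu ≠ tv := by
  rintro rfl
  have htu : tu = 1 := (Nat.coprime_self tu).1 h.coprime_t
  have hmv : mv = 1 := by have := h.mv_le_tv; have := h.one_le_mv; omega
  have := h.cast_v
  rw [hmv, htu, Nat.cast_one, mul_one, ← Nat.cast_one] at this
  have := eq_of_natCast_eq_of_lt hcn (by omega) this
  omega

lemma four_le_tv (h : DescentState n c mu tu mv tv) (hc : 4 ≤ c) (hcn : c < n)
    (h3n : ¬ 3 ∣ n) : 4 ≤ tv := by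
  have hv := h.cast_v
  have := h.mv_le_tv
  rcases h.mv_eq_one_or with rfl | hmv
  · rw [Nat.cast_one, mul_one] at hv
    have := eq_of_natCast_eq_of_lt hcn h.tv_lt hv
    omega
  · by_contra! htv
    obtain rfl : tv = 3 := by omega
    obtain rfl : mv = 3 := by omega
    have h3 : IsUnit (3 : ZMod n) := by
      exact_mod_cast (ZMod.isUnit_iff_coprime 3 n).2
        ((Nat.Prime.coprime_iff_not_dvd Nat.prime_three).2 h3n)
    have : (c : ZMod n) = ((1 : ℕ) : ZMod n) := by
      apply h3.mul_left_cancel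
      push_cast at hv ⊢
      linear_combination hv
    have := eq_of_natCast_eq_of_lt hcn (by omega) this
    omega

lemma three_mul_add_lt (h : DescentState n c mu tu mv tv) (hn : 289 ≤ n) (hc : 4 ≤ c)
    (hcn : c < n) (h3n : ¬ 3 ∣ n) : 3 * (mv + mu) < n :=
  three_mul_add_lt_of_det h.det hn h.tu_pos (h.four_le_tv hc hcn h3n) h.mv_le_tv h.two_le_mu
    h.three_le_mu

lemma of_coprime (hcop : Coprime c n) (hc : 1 < c) (hcn : 2 * c + 3 ≤ n) :
    DescentState n c (n / c) (n % c) 1 c where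
  det := by rw [mul_comm, one_mul]; exact Nat.div_add_mod n c
  cast_v := by rw [Nat.cast_one, mul_one]
  cast_u := by
    have := congrArg (Nat.cast : ℕ → ZMod n) (Nat.div_add_mod n c)
    push_cast at this
    rw [ZMod.natCast_self] at this
    linear_combination this
  tu_pos := Nat.pos_of_ne_zero fun h0 => by
    have := hcop.eq_one_of_dvd (Nat.dvd_of_mod_eq_zero h0)
    omega
  mv_le_tv := by omega
  two_le_mu := (Nat.le_div_iff_mul_le (by omega)).2 (by omega)
  three_le_mu hr := by
    have := Nat.div_add_mod n c
    by_contra! hq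
    have : c * (n / c) ≤ c * 2 := Nat.mul_le_mul_left c (by omega)
    omega
  mv_eq_one_or := Or.inl rfl
  coprime_t := by rw [Nat.Coprime, ← Nat.gcd_rec]; exact hcop
  coprime_m := Nat.coprime_one_right _

lemma cast_add (h : DescentState n c mu tu mv (T + tu)) :
    (c : ZMod n) * ((mv + mu : ℕ) : ZMod n) = T := by
  have hv := h.cast_v
  have hu := h.cast_u
  push_cast at hv hu ⊢
  linear_combination hv + hu

/-- The next convergent `m = (tu / T + 1) (mv + mu) + mu` satisfies `c m ≡ T - tu % T` and
`T m = n + (mv + mu) (T - tu % T)`. -/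
lemma exists_isGoodMultiplier_of_dvd_add (h : DescentState n c mu tu mv (T + tu))
    (hT : 0 < T) (hcross : T < mv + mu) (hpM : p ∣ mv + mu) (hp : 7 ≤ p) (hpn : p ∣ n)
    (hn : 289 ≤ n) : ∃ m, IsGoodMultiplier p n c m := by
  have hcM := h.cast_add
  have hpT : p ∣ T := by
    have := congrArg (ZMod.castHom hpn (ZMod p)) hcM
    rwa [map_mul, map_natCast, map_natCast, map_natCast,
      (ZMod.natCast_eq_zero_iff _ p).2 hpM, mul_zero, eq_comm,
      ZMod.natCast_eq_zero_iff] at this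
  have hT7 : 7 ≤ T := hp.trans (Nat.le_of_dvd hT hpT)
  have hpmu : ¬ p ∣ mu := fun hmu => by
    have := Nat.le_of_dvd one_pos
      (h.coprime_m.gcd_eq_one ▸ Nat.dvd_gcd hmu ((Nat.dvd_add_left hmu).1 hpM))
    omega
  have hr : 0 < tu % T := Nat.pos_of_ne_zero fun h0 => by
    have := (Nat.coprime_add_self_right.1 h.coprime_t).symm.eq_one_of_dvd
      (Nat.dvd_of_mod_eq_zero h0)
    omega
  have htu := Nat.div_add_mod tu T
  have hrT := Nat.mod_lt tu hT
  have hdet : mu * T + (mv + mu) * tu = n := by rw [← h.det]; ring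
  refine ⟨(tu / T + 1) * (mv + mu) + mu, fun hdvd => hpmu ?_, ?_, T - tu % T, by omega, ?_, ?_⟩
  · exact (Nat.dvd_add_right (dvd_mul_of_dvd_right hpM _)).1 hdvd
  · have hTm : T * ((tu / T + 1) * (mv + mu) + mu) = n + (mv + mu) * (T - tu % T) := by
      zify [hrT.le] at htu hdet ⊢
      linear_combination ((mv : ℤ) + mu) * htu + hdet
    have hbound : 3 * ((mv + mu) * (T - tu % T)) < n * (T - 3) := by
      rcases Nat.lt_or_ge tu T with hlt | hge
      · rw [Nat.mod_eq_of_lt hlt]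
        exact three_mul_mul_sub_lt_mul_sub hdet hn h.tu_pos hT7 hlt h.two_le_mu h.three_le_mu
          h.mv_le_tv
      · exact three_mul_mul_lt_mul_sub hdet hT7 hge (by omega) (by omega)
    refine Nat.lt_of_mul_lt_mul_left (a := T) ?_
    calc T * (3 * ((tu / T + 1) * (mv + mu) + mu))
        = 3 * n + 3 * ((mv + mu) * (T - tu % T)) := by rw [mul_left_comm, hTm]; ring
      _ < 3 * n + n * (T - 3) := by omega
      _ = T * n := by zify [show 3 ≤ T by omega]; ring
  · have : mv + mu ≤ (tu / T + 1) * (mv + mu) := Nat.le_mul_of_pos_left _ (Nat.succ_pos _)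
    omega
  · have hu := h.cast_u
    have htu' := congrArg (Nat.cast : ℕ → ZMod n) htu
    push_cast [hrT.le] at hcM hu htu' ⊢
    linear_combination (↑(tu / T) + 1 : ZMod n) * hcM + hu + htu'

theorem exists_isGoodMultiplier {mu tu mv tv : ℕ} (h : DescentState n c mu tu mv tv)
    (hp : 7 ≤ p) (hpn : p ∣ n) (hn : 289 ≤ n) (hc : 4 ≤ c) (hcn : c < n) (h3n : ¬ 3 ∣ n) :
    ∃ m, IsGoodMultiplier p n c m := by
  have htu := h.tu_pos
  have htv := h.one_le_mv.trans h.mv_le_tv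
  rcases lt_trichotomy tu tv with hlt | heq | hgt
  · obtain ⟨T, rfl⟩ : ∃ T, tv = T + tu := ⟨tv - tu, by omega⟩
    by_cases hle : mv + mu ≤ T
    · exact (h.mv_add_mu hle).exists_isGoodMultiplier hp hpn hn hc hcn h3n
    by_cases hpM : p ∣ mv + mu
    · exact h.exists_isGoodMultiplier_of_dvd_add (by omega) (by omega) hpM hp hpn hn
    · exact ⟨mv + mu, hpM, h.three_mul_add_lt hn hc hcn h3n, T, by omega, by omega, h.cast_add⟩
  · exact absurd heq (h.tu_ne_tv (by omega) hcn)
  · obtain ⟨T, rfl⟩ : ∃ T, tu = T + tv := ⟨tu - tv, by omega⟩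
    exact (h.mu_add_mv (by omega)).exists_isGoodMultiplier hp hpn hn hc hcn h3n
termination_by tu + tv

end DescentState

theorem exists_isGoodMultiplier {p μ n c : ℕ} (hp : p.Prime) (hp7 : 7 ≤ p) (hn : n = p ^ μ)
    (hn289 : 289 ≤ n) (hc : 4 ≤ c) (hcn : 2 * c + 3 ≤ n) : ∃ m, IsGoodMultiplier p n c m := by
  by_cases hpc : p ∣ c
  · exact exists_isGoodMultiplier_of_dvd hp hp7 hn hpc (by omega) (by omega)
  have hμ : μ ≠ 0 := by
    rintro rfl
    rw [pow_zero] at hn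
    omega
  have hcop : Coprime c n := hn ▸ Nat.Coprime.pow_right μ (hp.coprime_iff_not_dvd.2 hpc).symm
  have h3n : ¬ 3 ∣ n := fun h3 => by
    have := (Nat.prime_dvd_prime_iff_eq Nat.prime_three hp).1
      (Nat.prime_three.dvd_of_dvd_pow (hn ▸ h3))
    omega
  exact (DescentState.of_coprime hcop (by omega) hcn).exists_isGoodMultiplier hp7
    (hn ▸ dvd_pow_self p hμ) hn289 hc (by omega) h3n

theorem stmt_11_general (p μ n b c : ℕ) (hp : p.Prime) (hp7 : 7 ≤ p)
    (hn : n = p ^ μ) (hn289 : 289 ≤ n)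
    (hb : 3 ≤ b) (hbc : c = b + 1) (hc : 2 * c < n) :
    IsLeast {S : ℕ | ∃ m : ℕ, Nat.gcd m n = 1 ∧
        S = lpr n m + lpr n m + lpr n (m * c) + lpr n (m * (n - b)) +
          lpr n (m * (n - 3))}
      (if c = (n - 1) / 2 then 2 * n else n) := by
  have hodd : n % 2 = 1 := by
    rw [← Nat.odd_iff, hn]
    exact (hp.odd_of_ne_two (by omega)).pow
  have hsum : 1 + 1 + c + (n - b) + (n - 3) = 2 * n := by omega
  refine ⟨?_, ?_⟩
  · split_ifs with hcn
    · exact ⟨1, Nat.gcd_one_left n, (residueSum_one hbc hb hc).symm⟩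
    · obtain ⟨m, hpm, hm, t, ht, htm, hcm⟩ :=
        exists_isGoodMultiplier (c := c) hp hp7 hn hn289 (by omega) (by omega)
      refine ⟨m, ?_, (residueSum_eq_self hbc (by omega) hm ht htm hcm).symm⟩
      rw [hn]
      exact ((hp.coprime_iff_not_dvd.2 hpm).symm).pow_right μ
  · rintro S ⟨m, -, rfl⟩
    split_ifs with hcn
    · exact two_mul_le_residueSum (by omega) hbc hsum m
    · exact Nat.le_of_dvd (residueSum_pos m (by omega)) (dvd_residueSum hsum m)

theorem stmt_11 (p μ n b c : ℕ) (hp : p.Prime) (hp7 : 7 ≤ p) (hμ : 2 ≤ μ)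
    (hn : n = p ^ μ) (hn289 : 289 ≤ n)
    (hb : 3 ≤ b) (hbc : c = b + 1) (hc : 2 * c < n)
    (hzs : n ∣ ∑ i, (![1, 1, c, n - b, n - 3] : Fin 5 → ℕ) i)
    (hmin : ∀ s : Finset (Fin 5), s.Nonempty → s ≠ Finset.univ →
      ¬ n ∣ ∑ i ∈ s, (![1, 1, c, n - b, n - 3] : Fin 5 → ℕ) i) :
    IsLeast {S : ℕ | ∃ m : ℕ, Nat.gcd m n = 1 ∧
        S = lpr n m + lpr n m + lpr n (m * c) + lpr n (m * (n - b)) +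
          lpr n (m * (n - 3))}
      (if c = (n - 1) / 2 then 2 * n else n) :=
  stmt_11_general p μ n b c hp hp7 hn hn289 hb hbc hc
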